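/- arXiv:quant-ph/0604089 — 3 statements merged into one kernel-verified Lean document; each statement's English description precedes it below -/
import Mathlib

section
/- Let K be a field of characteristic zero, let k ≥ 3, and let f₁,…,f_k ∈ ℤ[x] be nonzero univariate polynomials of degree at most d (viewed in K[x] via the canonical map ℤ → K). For polynomials g₁,…,g_m, let Z_K(g₁,…,g_m) denote the set of common zeroes of g₁,…,g_m in K. Set N := 18dk². Then the number of pairs (a,b) = ((a₁,…,a_k),(b₁,…,b_k)) ∈ {1,…,N}^k × {1,…,N}^k such that Z_K(∑_{i=1}^k aᵢfᵢ, ∑_{i=1}^k bᵢfᵢ) = Z_K(f₁,…,f_k) is at least (8/9)·N^{2k}. Equivalently, if (a,b) is chosen uniformly at random from {1,…,N}^{2k}, then with probability at least 8/9 the two random linear combinations ∑aᵢfᵢ and ∑bᵢfᵢ have exactly the same common zero set in K as the full system f₁,…,f_k. -/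
open Polynomial

open Finset

section Aux

variable {K : Type*} [Field K] [CharZero K]

lemma ev_eq {k : ℕ} (f : Fin k → Polynomial ℤ) (x : K) (c : Fin k → ℕ) :
    aeval x (∑ i, (c i : ℤ) • f i) = ∑ i, (c i : K) * aeval x (f i) := by
  rw [map_sum]
  refine Finset.sum_congr rfl fun i _ => ?_
  rw [map_zsmul, zsmul_eq_mul, Int.cast_natCast]

lemma prod_filter_card_le {α β : Type*} [DecidableEq α]
    (S : Finset α) (T : Finset β) (R : α × β → Prop) [DecidablePred R] (m : ℕ)
    (h : ∀ a ∈ S, (T.filter (fun b => R (a, b))).card ≤ m) :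
    ((S ×ˢ T).filter R).card ≤ S.card * m := by
  classical
  have hmem : ∀ p ∈ (S ×ˢ T).filter R, p.1 ∈ S := by
    intro p hp
    simp only [Finset.mem_filter, Finset.mem_product] at hp
    exact hp.1.1
  rw [Finset.card_eq_sum_card_fiberwise hmem]
  have hfib : ∀ a ∈ S, (((S ×ˢ T).filter R).filter (fun p => p.1 = a)).card ≤ m := by
    intro a ha
    refine le_trans (Finset.card_le_card_of_injOn Prod.snd ?_ ?_) (h a ha)
    · rintro ⟨pa, pb⟩ hp
      simp only [Finset.mem_coe, Finset.mem_filter, Finset.mem_product] at hp ⊢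
      obtain ⟨⟨⟨hS, hT⟩, hR⟩, hfst⟩ := hp
      subst hfst
      exact ⟨hT, hR⟩
    · rintro ⟨pa, pb⟩ hp ⟨qa, qb⟩ hq hsnd
      simp only [Finset.coe_filter, Set.mem_setOf_eq] at hp hq
      simp only at hsnd
      have h1 : pa = qa := hp.2.trans hq.2.symm
      simp [h1, hsnd]
  calc ∑ a ∈ S, (((S ×ˢ T).filter R).filter (fun p => p.1 = a)).card
      ≤ ∑ _a ∈ S, m := Finset.sum_le_sum hfib
    _ = S.card * m := by rw [Finset.sum_const, smul_eq_mul]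

lemma lin_count [DecidableEq K] {k N : ℕ} (c : Fin k → K) (j : Fin k) (hcj : c j ≠ 0) :
    ((Fintype.piFinset (fun _ : Fin k => Finset.Icc 1 N)).filter
      (fun (b : Fin k → ℕ) => ∑ i, (b i : K) * c i = 0)).card ≤ N ^ (k - 1) := by
  classical
  have hT : (Fintype.piFinset (fun i : Fin k =>
      if i = j then ({1} : Finset ℕ) else Finset.Icc 1 N)).card = N ^ (k - 1) := by
    rw [Fintype.card_piFinset]
    rw [← Finset.prod_erase_mul _ _ (Finset.mem_univ j)]
    simp only [if_pos rfl, Finset.card_singleton, mul_one]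
    rw [Finset.prod_congr rfl (fun i hi => by
      rw [if_neg (Finset.ne_of_mem_erase hi), Nat.card_Icc]),
      Finset.prod_const, Finset.card_erase_of_mem (Finset.mem_univ j),
      Finset.card_univ, Fintype.card_fin]
    simp
  rw [← hT]
  apply Finset.card_le_card_of_injOn (fun b => Function.update b j 1)
  · intro b hb
    simp only [Finset.mem_coe, Finset.mem_filter, Fintype.mem_piFinset] at hb ⊢
    intro i
    by_cases hij : i = j
    · subst hij; simp [Function.update_self]
    · simp [Function.update_of_ne hij, if_neg hij, hb.1 i]
  · intro b hb b' hb' heq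
    simp only [Finset.coe_filter, Set.mem_setOf_eq] at hb hb'
    have hoff : ∀ i, i ≠ j → b i = b' i := by
      intro i hij
      have := congrFun heq i
      simpa [Function.update_of_ne hij] using this
    have hsum : ∀ (g : Fin k → ℕ), (∑ i, (g i : K) * c i) =
        (g j : K) * c j + ∑ i ∈ Finset.univ.erase j, (g i : K) * c i := by
      intro g
      rw [← Finset.add_sum_erase _ _ (Finset.mem_univ j)]
    have h1 := hb.2
    have h2 := hb'.2
    rw [hsum b] at h1
    rw [hsum b'] at h2
    have hrest : ∑ i ∈ Finset.univ.erase j, ((b i : K) * c i) =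
        ∑ i ∈ Finset.univ.erase j, ((b' i : K) * c i) :=
      Finset.sum_congr rfl (fun i hi => by rw [hoff i (Finset.ne_of_mem_erase hi)])
    have : (b j : K) * c j = (b' j : K) * c j := by
      rw [hrest] at h1
      exact add_right_cancel (h1.trans h2.symm)
    have hbj : (b j : K) = (b' j : K) := mul_right_cancel₀ hcj this
    have hbj' : b j = b' j := Nat.cast_injective hbj
    funext i
    by_cases hij : i = j
    · subst hij; exact hbj'
    · exact hoff i hij

end Aux

/-- Lemma 3 of the paper (random linear combinations preserve the common zero
set with probability at least 8/9), stated as a counting inequality over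
pairs of coefficient vectors drawn from `{1,…,18dk²}^k × {1,…,18dk²}^k`. -/
theorem stmt0 (K : Type*) [Field K] [CharZero K] (k d : ℕ) (hk : 3 ≤ k)
    (f : Fin k → Polynomial ℤ) (hf : ∀ i, f i ≠ 0) (hdeg : ∀ i, (f i).natDegree ≤ d) :
    8 * (18 * d * k ^ 2) ^ (2 * k) ≤
      9 * Set.ncard {ab : (Fin k → ℕ) × (Fin k → ℕ) |
        (∀ i, ab.1 i ∈ Finset.Icc 1 (18 * d * k ^ 2)) ∧
        (∀ i, ab.2 i ∈ Finset.Icc 1 (18 * d * k ^ 2)) ∧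
        {x : K | aeval x (∑ i, (ab.1 i : ℤ) • f i) = 0 ∧
                 aeval x (∑ i, (ab.2 i : ℤ) • f i) = 0}
          = {x : K | ∀ i, aeval x (f i) = 0}} := by
  classical
  by_cases hd : d = 0
  · subst hd
    have h0 : 18 * 0 * k ^ 2 = 0 := by ring
    rw [h0, zero_pow (by omega : 2 * k ≠ 0)]
    simp
  have hd1 : 1 ≤ d := Nat.pos_of_ne_zero hd
  set N := 18 * d * k ^ 2 with hNdef
  have hk2 : 9 ≤ k ^ 2 := by
    calc (9 : ℕ) = 3 ^ 2 := by norm_num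
    _ ≤ k ^ 2 := Nat.pow_le_pow_left hk 2
  have hN1 : 1 ≤ N := by
    have : 1 * 1 * 1 ≤ 18 * d * k ^ 2 :=
      Nat.mul_le_mul (Nat.mul_le_mul (by norm_num) hd1) (by omega)
    simpa using this
  have hN9 : 9 * (d + 1) ≤ N := by
    calc 9 * (d + 1) ≤ 18 * d * 9 := by omega
      _ ≤ 18 * d * k ^ 2 := Nat.mul_le_mul_left _ hk2
  have hk0 : 0 < k := by omega
  set A : Finset (Fin k → ℕ) := Fintype.piFinset (fun _ : Fin k => Finset.Icc 1 N) with hAdef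
  have hAcard : A.card = N ^ k := by
    rw [hAdef, Fintype.card_piFinset]
    simp [Nat.card_Icc]
  set Good : (Fin k → ℕ) × (Fin k → ℕ) → Prop := fun p =>
    {x : K | aeval x (∑ i, (p.1 i : ℤ) • f i) = 0 ∧ aeval x (∑ i, (p.2 i : ℤ) • f i) = 0}
      = {x : K | ∀ i, aeval x (f i) = 0} with hGooddef
  set G := (A ×ˢ A).filter Good with hGdef
  have hset : {ab : (Fin k → ℕ) × (Fin k → ℕ) |
        (∀ i, ab.1 i ∈ Finset.Icc 1 N) ∧ (∀ i, ab.2 i ∈ Finset.Icc 1 N) ∧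
        {x : K | aeval x (∑ i, (ab.1 i : ℤ) • f i) = 0 ∧
                 aeval x (∑ i, (ab.2 i : ℤ) • f i) = 0}
          = {x : K | ∀ i, aeval x (f i) = 0}} = ↑G := by
    ext p
    simp only [hGdef, Finset.coe_filter, Set.mem_setOf_eq, Finset.mem_product, hAdef,
      Fintype.mem_piFinset, hGooddef]
    tauto
  rw [hset, Set.ncard_coe_finset]
  -- bad sets
  set Bad := (A ×ˢ A).filter (fun p => ¬ Good p) with hBdef
  have hGB : G.card + Bad.card = N ^ (2 * k) := by
    rw [hGdef, hBdef, Finset.card_filter_add_card_filter_not, Finset.card_product,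
      hAcard, ← pow_add, two_mul]
  set Bad1 := (A ×ˢ A).filter (fun p : (Fin k → ℕ) × (Fin k → ℕ) =>
      ∑ i, (p.1 i : ℤ) • f i = 0) with hB1def
  set Bad2 := (A ×ˢ A).filter (fun p : (Fin k → ℕ) × (Fin k → ℕ) =>
      (∑ i, (p.1 i : ℤ) • f i ≠ 0) ∧
      ∃ x : K, (∃ j, aeval x (f j) ≠ 0) ∧
        aeval x (∑ i, (p.1 i : ℤ) • f i) = 0 ∧
        aeval x (∑ i, (p.2 i : ℤ) • f i) = 0) with hB2def
  have hsub : Bad ⊆ Bad1 ∪ Bad2 := by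
    intro p hp
    simp only [hBdef, Finset.mem_filter] at hp
    obtain ⟨hpA, hnG⟩ := hp
    rw [Finset.mem_union]
    by_cases hz : ∑ i, (p.1 i : ℤ) • f i = 0
    · exact Or.inl (Finset.mem_filter.2 ⟨hpA, hz⟩)
    · refine Or.inr (Finset.mem_filter.2 ⟨hpA, hz, ?_⟩)
      have hsup : {x : K | ∀ i, aeval x (f i) = 0} ⊆
          {x : K | aeval x (∑ i, (p.1 i : ℤ) • f i) = 0 ∧
                   aeval x (∑ i, (p.2 i : ℤ) • f i) = 0} := by
        intro x hx
        simp only [Set.mem_setOf_eq] at hx ⊢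
        constructor <;> · rw [ev_eq]; exact Finset.sum_eq_zero fun i _ => by rw [hx i, mul_zero]
      have hns : ¬ ({x : K | aeval x (∑ i, (p.1 i : ℤ) • f i) = 0 ∧
                   aeval x (∑ i, (p.2 i : ℤ) • f i) = 0} ⊆
          {x : K | ∀ i, aeval x (f i) = 0}) := by
        intro hsub'
        exact hnG (subset_antisymm hsub' hsup)
      obtain ⟨x, hx1, hx2⟩ := Set.not_subset.1 hns
      simp only [Set.mem_setOf_eq] at hx1 hx2
      push_neg at hx2
      obtain ⟨j, hj⟩ := hx2
      exact ⟨x, ⟨j, hj⟩, hx1.1, hx1.2⟩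
  -- Bad1 bound
  have hBad1 : Bad1.card ≤ N ^ (k - 1) * N ^ k := by
    set j0 : Fin k := ⟨0, hk0⟩
    obtain ⟨n, hn⟩ : ∃ n, (f j0).coeff n ≠ 0 := by
      by_contra h
      push_neg at h
      exact hf j0 (Polynomial.ext fun n => by rw [h n, Polynomial.coeff_zero])
    have hsub1 : Bad1 ⊆ (A.filter (fun a : Fin k → ℕ =>
        ∑ i, (a i : K) * ((f i).coeff n : K) = 0)) ×ˢ A := by
      rintro ⟨a, b⟩ hab
      simp only [hB1def, Finset.mem_filter, Finset.mem_product] at hab ⊢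
      obtain ⟨⟨haA, hbA⟩, hz⟩ := hab
      refine ⟨⟨haA, ?_⟩, hbA⟩
      have hc := congrArg (fun q => Polynomial.coeff q n) hz
      simp only [Polynomial.finset_sum_coeff, Polynomial.coeff_smul, smul_eq_mul,
        Polynomial.coeff_zero] at hc
      have hc2 : ((∑ i, (a i : ℤ) * (f i).coeff n : ℤ) : K) = 0 := by rw [hc]; exact Int.cast_zero
      push_cast at hc2
      exact hc2
    calc Bad1.card ≤ ((A.filter (fun a : Fin k → ℕ =>
            ∑ i, (a i : K) * ((f i).coeff n : K) = 0)) ×ˢ A).card := Finset.card_le_card hsub1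
      _ = (A.filter (fun a : Fin k → ℕ =>
            ∑ i, (a i : K) * ((f i).coeff n : K) = 0)).card * A.card := Finset.card_product _ _
      _ ≤ N ^ (k - 1) * N ^ k := by
          refine Nat.mul_le_mul ?_ (le_of_eq hAcard)
          exact lin_count (fun i => ((f i).coeff n : K)) j0
            (show ((f j0).coeff n : K) ≠ 0 from Int.cast_ne_zero.mpr hn)
  -- Bad2 bound
  have hBad2 : Bad2.card ≤ N ^ k * (d * N ^ (k - 1)) := by
    rw [hB2def, ← hAcard]
    refine prod_filter_card_le A A _ (d * N ^ (k - 1)) ?_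
    intro a haA
    by_cases hpa : ∑ i, (a i : ℤ) • f i = 0
    · rw [Finset.filter_false_of_mem (fun b _ h => h.1 hpa)]
      simp
    · set P : Polynomial K := (∑ i, (a i : ℤ) • f i).map (algebraMap ℤ K) with hPdef
      have hP : P ≠ 0 := by
        rw [hPdef]
        exact (Polynomial.map_ne_zero_iff (algebraMap ℤ K).injective_int).2 hpa
      set R : Finset K := P.roots.toFinset with hRdef
      have hRcard : R.card ≤ d := by
        calc R.card ≤ Multiset.card P.roots := P.roots.toFinset_card_le
          _ ≤ P.natDegree := Polynomial.card_roots' P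
          _ ≤ (∑ i, (a i : ℤ) • f i).natDegree := Polynomial.natDegree_map_le
          _ ≤ d := Polynomial.natDegree_sum_le_of_forall_le _ _ (fun i _ =>
              le_trans (Polynomial.natDegree_smul_le _ _) (hdeg i))
      have hsub2 : A.filter (fun b : Fin k → ℕ =>
          (∑ i, (a i : ℤ) • f i ≠ 0) ∧
          ∃ x : K, (∃ j, aeval x (f j) ≠ 0) ∧
            aeval x (∑ i, (a i : ℤ) • f i) = 0 ∧
            aeval x (∑ i, (b i : ℤ) • f i) = 0) ⊆
          R.biUnion (fun x => A.filter (fun b : Fin k → ℕ =>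
            (∃ j, aeval x (f j) ≠ 0) ∧ aeval x (∑ i, (b i : ℤ) • f i) = 0)) := by
        intro b hb
        simp only [Finset.mem_filter] at hb
        obtain ⟨hbA, _, x, hxj, hx1, hx2⟩ := hb
        refine Finset.mem_biUnion.2 ⟨x, ?_, Finset.mem_filter.2 ⟨hbA, hxj, hx2⟩⟩
        rw [hRdef, Multiset.mem_toFinset, Polynomial.mem_roots hP, hPdef,
          Polynomial.IsRoot, Polynomial.eval_map, ← Polynomial.aeval_def]
        exact hx1
      refine le_trans (Finset.card_le_card hsub2) ?_
      refine le_trans (Finset.card_biUnion_le) ?_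
      have hxbound : ∀ x ∈ R, (A.filter (fun b : Fin k → ℕ =>
          (∃ j, aeval x (f j) ≠ 0) ∧ aeval x (∑ i, (b i : ℤ) • f i) = 0)).card
            ≤ N ^ (k - 1) := by
        intro x _
        by_cases hj : ∃ j, aeval x (f j) ≠ 0
        · obtain ⟨j, hj'⟩ := hj
          refine le_trans (Finset.card_le_card ?_)
            (lin_count (fun i => aeval x (f i)) j hj')
          intro b hb
          simp only [Finset.mem_filter] at hb ⊢
          refine ⟨hb.1, ?_⟩
          rw [← ev_eq]
          exact hb.2.2
        · rw [Finset.filter_false_of_mem (fun b _ h => hj h.1)]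
          simp
      calc ∑ x ∈ R, (A.filter (fun b : Fin k → ℕ =>
              (∃ j, aeval x (f j) ≠ 0) ∧ aeval x (∑ i, (b i : ℤ) • f i) = 0)).card
          ≤ ∑ _x ∈ R, N ^ (k - 1) := Finset.sum_le_sum hxbound
        _ = R.card * N ^ (k - 1) := by rw [Finset.sum_const, smul_eq_mul]
        _ ≤ d * N ^ (k - 1) := Nat.mul_le_mul_right _ hRcard
  -- assemble
  have hexp1 : N ^ (k - 1) * N ^ k = N ^ (2 * k - 1) := by
    rw [← pow_add]
    congr 1
    omega
  have hexp2 : N ^ k * (d * N ^ (k - 1)) = d * N ^ (2 * k - 1) := by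
    rw [← hexp1]
    ring
  have hBad : Bad.card ≤ (d + 1) * N ^ (2 * k - 1) := by
    calc Bad.card ≤ (Bad1 ∪ Bad2).card := Finset.card_le_card hsub
      _ ≤ Bad1.card + Bad2.card := Finset.card_union_le _ _
      _ ≤ N ^ (k - 1) * N ^ k + N ^ k * (d * N ^ (k - 1)) := Nat.add_le_add hBad1 hBad2
      _ = (d + 1) * N ^ (2 * k - 1) := by rw [hexp1, hexp2]; ring
  have hpow : N ^ (2 * k) = N * N ^ (2 * k - 1) := by
    conv_lhs => rw [show 2 * k = 1 + (2 * k - 1) by omega]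
    rw [pow_add, pow_one]
  have h9 : 9 * Bad.card ≤ N ^ (2 * k) := by
    calc 9 * Bad.card ≤ 9 * ((d + 1) * N ^ (2 * k - 1)) := Nat.mul_le_mul_left _ hBad
      _ = (9 * (d + 1)) * N ^ (2 * k - 1) := by ring
      _ ≤ N * N ^ (2 * k - 1) := Nat.mul_le_mul_right _ hN9
      _ = N ^ (2 * k) := hpow.symm
  set M := N ^ (2 * k)
  omega
end

section
/- Let K be a field of characteristic zero, let k ≥ 1 and N ≥ 1 be integers, and let f₁,…,f_k ∈ ℤ[x] be nonzero univariate polynomials of degree at most d (viewed in K[x]). Let W := (⋃_{i=1}^k Z_K(fᵢ)) \ Z_K(f₁,…,f_k), i.e., the set of points of K that are zeroes of at least one fᵢ but not common zeroes of all of them. Then the number of tuples u = (u₁,…,u_k) ∈ {1,…,N}^k for which there exists ζ ∈ W with ∑_{i=1}^k uᵢfᵢ(ζ) = 0 is at most d·k²·N^{k−1}. -/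
open Polynomial Finset
open scoped Classical

lemma aux_count (K : Type*) [Field K] [CharZero K] (k N : ℕ) (c : Fin k → K)
    (j : Fin k) (hc : c j ≠ 0) :
    (Finset.filter (fun u : Fin k → ℕ => ∑ i, (u i : K) * c i = 0)
      (Fintype.piFinset fun _ : Fin k => Finset.Icc 1 N)).card ≤ N ^ (k - 1) := by
  classical
  have hsub : ∀ u ∈ (Finset.filter (fun u : Fin k → ℕ => ∑ i, (u i : K) * c i = 0)
      (Fintype.piFinset fun _ : Fin k => Finset.Icc 1 N)),
      Function.update u j 1 ∈ Fintype.piFinset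
        (fun i : Fin k => if i = j then ({1} : Finset ℕ) else Finset.Icc 1 N) := by
    intro u hu
    rw [Finset.mem_filter, Fintype.mem_piFinset] at hu
    rw [Fintype.mem_piFinset]
    intro i
    by_cases h : i = j
    · subst h; simp [Function.update_self]
    · simp [Function.update_of_ne h, h, hu.1 i]
  have hinj : Set.InjOn (fun u : Fin k → ℕ => Function.update u j 1)
      ((Finset.filter (fun u : Fin k → ℕ => ∑ i, (u i : K) * c i = 0)
      (Fintype.piFinset fun _ : Fin k => Finset.Icc 1 N)) : Set (Fin k → ℕ)) := by
    intro u hu v hv huv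
    rw [Finset.coe_filter, Set.mem_setOf_eq] at hu hv
    have hne : ∀ i, i ≠ j → u i = v i := by
      intro i hi
      have := congrFun huv i
      simpa [Function.update_of_ne hi] using this
    have hsum : ∑ i, ((u i : K) - (v i : K)) * c i = 0 := by
      rw [Finset.sum_congr rfl (fun i _ => sub_mul (u i : K) (v i) (c i)),
        Finset.sum_sub_distrib, hu.2, hv.2, sub_zero]
    have hzero : ∑ i, ((u i : K) - (v i : K)) * c i = ((u j : K) - (v j : K)) * c j :=
      Finset.sum_eq_single j (fun i _ hi => by rw [hne i hi, sub_self, zero_mul]) (by simp)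
    have hj : ((u j : K) - (v j : K)) * c j = 0 := by rw [← hzero, hsum]
    have : (u j : K) = (v j : K) := by
      rcases mul_eq_zero.mp hj with h | h
      · exact sub_eq_zero.mp h
      · exact absurd h hc
    have hjj : u j = v j := Nat.cast_injective this
    funext i
    by_cases h : i = j
    · subst h; exact hjj
    · exact hne i h
  have hcard := Finset.card_le_card_of_injOn _ hsub hinj
  refine hcard.trans ?_
  rw [Fintype.card_piFinset]
  have : ∀ i : Fin k, ((if i = j then ({1} : Finset ℕ) else Finset.Icc 1 N)).card
      = if i = j then 1 else N := by
    intro i; by_cases h : i = j <;> simp [h, Nat.card_Icc]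
  rw [Finset.prod_congr rfl (fun i _ => this i)]
  rw [← Finset.mul_prod_erase Finset.univ _ (Finset.mem_univ j)]
  simp only [if_pos rfl, one_mul]
  have hker : ∀ i ∈ Finset.univ.erase j, (if i = j then 1 else N) = N := by
    intro i hi; simp [Finset.mem_erase.mp hi |>.1]
  rw [Finset.prod_congr rfl hker, Finset.prod_const, Finset.card_erase_of_mem (Finset.mem_univ j),
    Finset.card_univ, Fintype.card_fin]
  simp

/-- The Schwartz-lemma counting step in the proof of Lemma 3 of the paper:
the number of coefficient vectors `u ∈ {1,…,N}^k` for which `∑ uᵢfᵢ` vanishes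
at some point of `W := (⋃ᵢ Z_K(fᵢ)) \ Z_K(f₁,…,f_k)` is at most `d·k²·N^(k-1)`. -/
theorem stmt1 (K : Type*) [Field K] [CharZero K] (k d N : ℕ) (hk : 1 ≤ k) (hN : 1 ≤ N)
    (f : Fin k → Polynomial ℤ) (hf : ∀ i, f i ≠ 0) (hdeg : ∀ i, (f i).natDegree ≤ d) :
    Set.ncard {u : Fin k → ℕ | (∀ i, u i ∈ Finset.Icc 1 N) ∧
      ∃ ζ ∈ (⋃ i, {x : K | aeval x (f i) = 0}) \ {x : K | ∀ i, aeval x (f i) = 0},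
        ∑ i, (u i : K) * aeval ζ (f i) = 0} ≤ d * k ^ 2 * N ^ (k - 1) := by
  classical
  set g : Fin k → Polynomial K := fun i => (f i).map (algebraMap ℤ K) with hg
  have hgne : ∀ i, g i ≠ 0 := fun i =>
    (Polynomial.map_ne_zero_iff (algebraMap ℤ K).injective_int).mpr (hf i)
  have haev : ∀ (x : K) i, aeval x (f i) = (g i).eval x := by
    intro x i; rw [hg]; simp [Polynomial.aeval_def, Polynomial.eval_map]
  set WF : Finset K := (Finset.univ.biUnion fun i => (g i).roots.toFinset).filter
      (fun ζ => ∃ j, (g j).eval ζ ≠ 0) with hWF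
  set box : Finset (Fin k → ℕ) := Fintype.piFinset fun _ : Fin k => Finset.Icc 1 N with hbox
  set Sfin : Finset (Fin k → ℕ) := box.filter
      (fun u => ∃ ζ ∈ WF, ∑ i, (u i : K) * (g i).eval ζ = 0) with hSfin
  -- the set is contained in ↑Sfin
  have hsub : {u : Fin k → ℕ | (∀ i, u i ∈ Finset.Icc 1 N) ∧
      ∃ ζ ∈ (⋃ i, {x : K | aeval x (f i) = 0}) \ {x : K | ∀ i, aeval x (f i) = 0},
        ∑ i, (u i : K) * aeval ζ (f i) = 0} ⊆ (Sfin : Set (Fin k → ℕ)) := by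
    intro u hu
    obtain ⟨hbox', ζ, ⟨hζ1, hζ2⟩, hζ3⟩ := hu
    rw [Set.mem_iUnion] at hζ1
    obtain ⟨i, hi⟩ := hζ1
    simp only [Set.mem_setOf_eq] at hi hζ2
    rw [Finset.mem_coe, hSfin, Finset.mem_filter]
    constructor
    · rw [hbox, Fintype.mem_piFinset]; exact hbox'
    · refine ⟨ζ, ?_, ?_⟩
      · rw [hWF, Finset.mem_filter]
        constructor
        · rw [Finset.mem_biUnion]
          exact ⟨i, Finset.mem_univ i, Multiset.mem_toFinset.mpr
            ((Polynomial.mem_roots (hgne i)).mpr (by rw [Polynomial.IsRoot, ← haev]; exact hi))⟩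
        · push_neg at hζ2
          obtain ⟨j, hj⟩ := hζ2
          exact ⟨j, by rw [← haev]; exact hj⟩
      · rw [← hζ3]; exact Finset.sum_congr rfl fun i _ => by rw [haev]
  have h1 : Set.ncard {u : Fin k → ℕ | (∀ i, u i ∈ Finset.Icc 1 N) ∧
      ∃ ζ ∈ (⋃ i, {x : K | aeval x (f i) = 0}) \ {x : K | ∀ i, aeval x (f i) = 0},
        ∑ i, (u i : K) * aeval ζ (f i) = 0} ≤ Sfin.card := by
    rw [← Set.ncard_coe_finset]
    exact Set.ncard_le_ncard hsub (Sfin.finite_toSet)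
  refine h1.trans ?_
  -- Sfin ⊆ biUnion
  have hsub2 : Sfin ⊆ WF.biUnion (fun ζ => box.filter
      (fun u => ∑ i, (u i : K) * (g i).eval ζ = 0)) := by
    intro u hu
    rw [hSfin, Finset.mem_filter] at hu
    obtain ⟨ζ, hζ, hsum⟩ := hu.2
    rw [Finset.mem_biUnion]
    exact ⟨ζ, hζ, Finset.mem_filter.mpr ⟨hu.1, hsum⟩⟩
  have h2 : Sfin.card ≤ WF.card * N ^ (k - 1) := by
    refine (Finset.card_le_card hsub2).trans ((Finset.card_biUnion_le).trans ?_)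
    refine (Finset.sum_le_card_nsmul WF _ (N ^ (k - 1)) ?_).trans_eq (by rw [smul_eq_mul])
    intro ζ hζ
    rw [hWF, Finset.mem_filter] at hζ
    obtain ⟨j, hj⟩ := hζ.2
    exact aux_count K k N (fun i => (g i).eval ζ) j hj
  refine h2.trans ?_
  -- WF.card ≤ k * d
  have hWFcard : WF.card ≤ k * d := by
    refine (Finset.card_filter_le _ _).trans ((Finset.card_biUnion_le).trans ?_)
    calc ∑ i : Fin k, (g i).roots.toFinset.card
        ≤ ∑ _i : Fin k, d := by
          refine Finset.sum_le_sum fun i _ => ?_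
          refine (Multiset.toFinset_card_le _).trans ?_
          refine (Polynomial.card_roots' (g i)).trans ?_
          exact (Polynomial.natDegree_map_le).trans (hdeg i)
      _ = k * d := by rw [Finset.sum_const, Finset.card_univ, Fintype.card_fin, smul_eq_mul]
  calc WF.card * N ^ (k - 1) ≤ (k * d) * N ^ (k - 1) := Nat.mul_le_mul_right _ hWFcard
    _ ≤ d * k ^ 2 * N ^ (k - 1) := by
        refine Nat.mul_le_mul_right _ ?_
        rw [mul_comm]
        exact Nat.mul_le_mul_left d (by nlinarith)
end

section
/- Fix n ≥ 1 and let p₁ < p₂ < ⋯ < p_n be the first n primes and Q_n := p₁p₂⋯p_n. For each i ∈ {1,…,n} let g_i := x^{Q_n/p_i} − 1 ∈ ℤ[x] and h_i := (x^{Q_n} − 1)/(x^{Q_n/p_i} − 1) ∈ ℤ[x] (an exact quotient in ℤ[x]). For a literal L over the Boolean variables X₁,…,X_n, define P(L) := g_i if L = X_i and P(L) := h_i if L = ¬X_i; for a clause C = L₁ ∨ L₂ ∨ L₃, define P_n(C) := lcm(P(L₁), P(L₂), P(L₃)) in ℤ[x]. Let K be a field possessing Q_n distinct Q_n-th roots of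 unity. Then a 3CNF Boolean formula B(X₁,…,X_n) = C₁ ∧ ⋯ ∧ C_k has a satisfying assignment in {0,1}^n if and only if there exists ζ ∈ K with ζ^{Q_n} = 1 and P_n(C₁)(ζ) = ⋯ = P_n(C_k)(ζ) = 0. -/
open Polynomial

/-- The product of the first `n` primes (`Q_n` in the paper). -/
noncomputable def primProd (n : ℕ) : ℕ := ∏ i ∈ Finset.range n, Nat.nth Nat.Prime i

/-- A literal over the Boolean variables `X₁,…,X_n`: `(false, i)` is `X_i`,
`(true, i)` is `¬X_i`. -/
abbrev Lit (n : ℕ) := Bool × Fin n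

/-- A 3CNF clause: a disjunction of three literals. -/
abbrev Clause3 (n : ℕ) := Lit n × Lit n × Lit n

/-- Truth value of a literal under an assignment. -/
def litHolds {n : ℕ} (σ : Fin n → Bool) (L : Lit n) : Prop :=
  if L.1 then σ L.2 = false else σ L.2 = true

/-- Truth value of a clause under an assignment. -/
def clauseHolds {n : ℕ} (σ : Fin n → Bool) (C : Clause3 n) : Prop :=
  litHolds σ C.1 ∨ litHolds σ C.2.1 ∨ litHolds σ C.2.2

/-- The Plaisted polynomial of a literal: `x^{Q_n/p_i} - 1` for `X_i`, and the
exact quotient `(x^{Q_n} - 1)/(x^{Q_n/p_i} - 1)` for `¬X_i`. -/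
noncomputable def plaistedLit (n : ℕ) (L : Lit n) : Polynomial ℤ :=
  if L.1 then (X ^ primProd n - 1) /ₘ (X ^ (primProd n / Nat.nth Nat.Prime L.2) - 1)
  else X ^ (primProd n / Nat.nth Nat.Prime L.2) - 1

/-- The Plaisted polynomial of a clause: the lcm (in `ℤ[x]`) of the Plaisted
polynomials of its three literals. -/
noncomputable def plaistedClause (n : ℕ) (C : Clause3 n) : Polynomial ℤ :=
  lcm (lcm (plaistedLit n C.1) (plaistedLit n C.2.1)) (plaistedLit n C.2.2)

section Aux

lemma pp_prime (i : ℕ) : (Nat.nth Nat.Prime i).Prime := Nat.prime_nth_prime i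

lemma pp_inj : Function.Injective (Nat.nth Nat.Prime) :=
  Nat.nth_injective Nat.infinite_setOf_prime

lemma primProd_eq_fin (n : ℕ) :
    primProd n = ∏ i : Fin n, Nat.nth Nat.Prime (i : ℕ) :=
  (Fin.prod_univ_eq_prod_range _ n).symm

lemma primProd_pos (n : ℕ) : 0 < primProd n :=
  Finset.prod_pos fun i _ => (pp_prime i).pos

lemma primProd_factor {n : ℕ} (i : Fin n) :
    primProd n = Nat.nth Nat.Prime (i : ℕ) *
      ∏ j ∈ Finset.univ.erase i, Nat.nth Nat.Prime (j : ℕ) := by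
  rw [primProd_eq_fin]
  exact (Finset.mul_prod_erase Finset.univ _ (Finset.mem_univ i)).symm

lemma pp_dvd_primProd {n : ℕ} (i : Fin n) :
    Nat.nth Nat.Prime (i : ℕ) ∣ primProd n := by
  rw [primProd_factor i]; exact Dvd.intro _ rfl

lemma primProd_div {n : ℕ} (i : Fin n) :
    primProd n / Nat.nth Nat.Prime (i : ℕ) =
      ∏ j ∈ Finset.univ.erase i, Nat.nth Nat.Prime (j : ℕ) := by
  conv_lhs => rw [primProd_factor i]
  rw [Nat.mul_div_cancel_left _ (pp_prime _).pos]

/-- Characterization of the roots of the Plaisted polynomial of a literal. -/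
lemma lit_root_iff {K : Type*} [Field K] {n : ℕ} {ζ : K}
    (hζ : ζ ^ primProd n = 1)
    (hchar : ∀ i : Fin n, (Nat.nth Nat.Prime (i : ℕ) : K) ≠ 0) (L : Lit n) :
    aeval ζ (plaistedLit n L) = 0 ↔
      (if L.1 then ζ ^ (primProd n / Nat.nth Nat.Prime (L.2 : ℕ)) ≠ 1
        else ζ ^ (primProd n / Nat.nth Nat.Prime (L.2 : ℕ)) = 1) := by
  set Q := primProd n with hQdef
  set p := Nat.nth Nat.Prime (L.2 : ℕ) with hpdef
  set m := Q / p with hmdef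
  have hpQ : p ∣ Q := pp_dvd_primProd L.2
  have hm : m * p = Q := Nat.div_mul_cancel hpQ
  have hmpos : 0 < m :=
    Nat.div_pos (Nat.le_of_dvd (primProd_pos n) hpQ) (pp_prime _).pos
  cases hL : L.1 with
  | false =>
    simp only [plaistedLit, hL, reduceIte, Bool.false_eq_true]
    rw [map_sub, map_pow, aeval_X, map_one, sub_eq_zero]
  | true =>
    simp only [plaistedLit, hL, reduceIte]
    have hmon : (X ^ m - 1 : Polynomial ℤ).Monic := by
      simpa using monic_X_pow_sub_C (1 : ℤ) hmpos.ne'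
    have hgeom : (X ^ m - 1 : Polynomial ℤ) *
        (∑ j ∈ Finset.range p, (X ^ m) ^ j) = X ^ Q - 1 := by
      rw [mul_comm, geom_sum_mul, ← pow_mul, hm]
    have hdiv : (X ^ Q - 1 : Polynomial ℤ) /ₘ (X ^ m - 1) =
        ∑ j ∈ Finset.range p, (X ^ m) ^ j := by
      rw [← hgeom, mul_divByMonic_cancel_left _ hmon]
    rw [hdiv, map_sum]
    simp only [map_pow, aeval_X]
    constructor
    · intro h0 hm1
      rw [hm1] at h0
      simp only [one_pow, Finset.sum_const, Finset.card_range, nsmul_eq_mul,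
        mul_one] at h0
      exact hchar L.2 h0
    · intro hne
      have hgs := geom_sum_mul (ζ ^ m) p
      rw [← pow_mul, hm, hζ, sub_self] at hgs
      rcases mul_eq_zero.1 hgs with h | h
      · exact h
      · exact absurd (sub_eq_zero.1 h) hne

/-- Roots of the clause polynomial are exactly common points of literal roots. -/
lemma clause_root_iff {K : Type*} [Field K] {n : ℕ} (ζ : K) (C : Clause3 n) :
    aeval ζ (plaistedClause n C) = 0 ↔
      aeval ζ (plaistedLit n C.1) = 0 ∨ aeval ζ (plaistedLit n C.2.1) = 0 ∨
        aeval ζ (plaistedLit n C.2.2) = 0 := by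
  set a := plaistedLit n C.1
  set b := plaistedLit n C.2.1
  set c := plaistedLit n C.2.2
  constructor
  · intro h0
    have hdvd : lcm (lcm a b) c ∣ a * (b * c) :=
      lcm_dvd (lcm_dvd (dvd_mul_right _ _)
          ((dvd_mul_right b c).trans (dvd_mul_left _ a)))
        ((dvd_mul_left c b).trans (dvd_mul_left _ a))
    obtain ⟨r, hr⟩ := hdvd
    have : aeval ζ (a * (b * c)) = 0 := by
      rw [hr, map_mul, show aeval ζ (lcm (lcm a b) c) = 0 from h0, zero_mul]
    simpa only [map_mul, mul_eq_zero] using this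
  · intro h
    have hdvd : ∀ q : Polynomial ℤ, q ∣ lcm (lcm a b) c → aeval ζ q = 0 →
        aeval ζ (lcm (lcm a b) c) = 0 := by
      intro q hq h0
      obtain ⟨r, hr⟩ := hq
      rw [hr, map_mul, h0, zero_mul]
    rcases h with h | h | h
    · exact hdvd a ((dvd_lcm_left a b).trans (dvd_lcm_left _ _)) h
    · exact hdvd b ((dvd_lcm_right a b).trans (dvd_lcm_left _ _)) h
    · exact hdvd c (dvd_lcm_right _ _) h

/-- The characteristic of `K` does not divide any of the first `n` primes. -/
lemma char_not_dvd {K : Type*} [Field K] {n : ℕ}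
    (hK : ∃ S : Finset K, S.card = primProd n ∧ ∀ x ∈ S, x ^ primProd n = 1)
    (i : Fin n) : (Nat.nth Nat.Prime (i : ℕ) : K) ≠ 0 := by
  classical
  obtain ⟨S, hcard, hS⟩ := hK
  intro h0
  set Q := primProd n with hQdef
  set p := Nat.nth Nat.Prime (i : ℕ) with hpdef
  have hp := pp_prime (i : ℕ)
  have hpQ : p ∣ Q := pp_dvd_primProd i
  have hchar : ringChar K = p := by
    have hdvd : ringChar K ∣ p := (ringChar.spec K p).mp h0
    rcases hp.eq_one_or_self_of_dvd _ hdvd with h | h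
    · exact absurd h (CharP.ringChar_ne_one)
    · exact h
  haveI : CharP K p := hchar ▸ ringChar.charP K
  haveI : Fact p.Prime := ⟨hp⟩
  have hQp : Q / p * p = Q := Nat.div_mul_cancel hpQ
  have hroot : ∀ s ∈ S, s ^ (Q / p) = 1 := by
    intro s hs
    have h1 : (s ^ (Q / p)) ^ p = 1 := by rw [← pow_mul, hQp]; exact hS s hs
    have h2 : (s ^ (Q / p) - 1) ^ p = 0 := by
      rw [sub_pow_char, h1, one_pow, sub_self]
    have h3 : s ^ (Q / p) - 1 = 0 := by
      exact pow_eq_zero_iff hp.ne_zero |>.mp h2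
    exact sub_eq_zero.mp h3
  have hQppos : 0 < Q / p :=
    Nat.div_pos (Nat.le_of_dvd (primProd_pos n) hpQ) hp.pos
  set f : Polynomial K := X ^ (Q / p) - C 1 with hfdef
  have hfm : f.Monic := monic_X_pow_sub_C 1 hQppos.ne'
  have hsub : S ⊆ f.roots.toFinset := by
    intro s hs
    rw [Multiset.mem_toFinset, mem_roots hfm.ne_zero]
    simp [hfdef, Polynomial.IsRoot, sub_eq_zero, hroot s hs]
  have hle : Q ≤ Q / p := by
    calc Q = S.card := hcard.symm
      _ ≤ f.roots.toFinset.card := Finset.card_le_card hsub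
      _ ≤ Multiset.card f.roots := Multiset.toFinset_card_le _
      _ ≤ f.natDegree := f.card_roots'
      _ = Q / p := natDegree_X_pow_sub_C
  exact absurd hle (Nat.not_le.mpr (Nat.div_lt_self (primProd_pos n) hp.one_lt))

/-- Existence of an element of order `Q_n` in `K`. -/
lemma exists_orderOf_eq {K : Type*} [Field K] {n : ℕ}
    (hK : ∃ S : Finset K, S.card = primProd n ∧ ∀ x ∈ S, x ^ primProd n = 1) :
    ∃ ζ : K, orderOf ζ = primProd n := by
  obtain ⟨S, hcard, hS⟩ := hK
  set Q := primProd n with hQdef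
  have hQ : 0 < Q := primProd_pos n
  have hne : ∀ s ∈ S, s ≠ 0 := by
    intro s hs h0
    have := hS s hs
    rw [h0, zero_pow hQ.ne'] at this
    exact zero_ne_one this
  have hki : Function.Injective (fun s : S =>
      (⟨Units.mk0 (s : K) (hne s s.2), by
          rw [mem_rootsOfUnity]
          ext
          push_cast
          exact hS s s.2⟩ : rootsOfUnity Q K)) := by
    intro s t hst
    have : ((s : K)) = ((t : K)) := by
      have := congrArg (fun x : rootsOfUnity Q K => ((x : Kˣ) : K)) hst
      simpa using this
    exact Subtype.ext this
  haveI : NeZero Q := ⟨hQ.ne'⟩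
  haveI : Fintype (rootsOfUnity Q K) := Fintype.ofFinite _
  have hcardG : Fintype.card (rootsOfUnity Q K) = Q := by
    refine le_antisymm (by rw [← Nat.card_eq_fintype_card]; exact card_rootsOfUnity ..) ?_
    calc Q = S.card := hcard.symm
      _ = Fintype.card S := (Fintype.card_coe S).symm
      _ ≤ Fintype.card (rootsOfUnity Q K) := Fintype.card_le_of_injective _ hki
  obtain ⟨g, hg⟩ := IsCyclic.exists_generator (α := rootsOfUnity Q K)
  refine ⟨((g : Kˣ) : K), ?_⟩
  rw [orderOf_units, Subgroup.orderOf_coe,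
    orderOf_eq_card_of_forall_mem_zpowers hg, Nat.card_eq_fintype_card, hcardG]

/-- The key divisibility criterion. -/
lemma dvd_primProd_div_iff {n : ℕ} (σ : Fin n → Bool) (i : Fin n) :
    (∏ j ∈ Finset.univ.filter (fun j => σ j = false), Nat.nth Nat.Prime (j : ℕ))
      ∣ primProd n / Nat.nth Nat.Prime (i : ℕ) ↔ σ i = true := by
  rw [primProd_div]
  constructor
  · intro hdvd
    by_contra hσ
    have hif : i ∈ Finset.univ.filter (fun j => σ j = false) := by
      simp [Bool.not_eq_true] at hσ
      simp [hσ]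
    have hpi : Nat.nth Nat.Prime (i : ℕ) ∣
        ∏ j ∈ Finset.univ.erase i, Nat.nth Nat.Prime (j : ℕ) :=
      dvd_trans (Finset.dvd_prod_of_mem (fun j : Fin n => Nat.nth Nat.Prime (j : ℕ)) hif) hdvd
    obtain ⟨j, hj, hdj⟩ :=
      ((pp_prime (i : ℕ)).prime.dvd_finset_prod_iff _).mp hpi
    have : (i : ℕ) = (j : ℕ) :=
      pp_inj ((Nat.prime_dvd_prime_iff_eq (pp_prime _) (pp_prime _)).mp hdj)
    have : i = j := Fin.ext this
    exact (Finset.mem_erase.mp hj).1 this.symm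
  · intro hσ
    refine Finset.prod_dvd_prod_of_subset _ _ _ ?_
    intro j hj
    rw [Finset.mem_filter] at hj
    rw [Finset.mem_erase]
    refine ⟨?_, Finset.mem_univ _⟩
    rintro rfl
    rw [hσ] at hj
    simp at hj

end Aux

/-- Lemma 1 of the paper (Plaisted's reduction over any field with `Q_n`
distinct `Q_n`-th roots of unity): a 3CNF formula `C₁ ∧ ⋯ ∧ C_k` is satisfiable
iff the Plaisted polynomials of its clauses have a common root `ζ ∈ K` with
`ζ^{Q_n} = 1`. -/
theorem stmt2 (K : Type*) [Field K] (n k : ℕ) (hn : 1 ≤ n)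
    (hK : ∃ S : Finset K, S.card = primProd n ∧ ∀ x ∈ S, x ^ primProd n = 1)
    (B : Fin k → Clause3 n) :
    (∃ σ : Fin n → Bool, ∀ j, clauseHolds σ (B j)) ↔
      ∃ ζ : K, ζ ^ primProd n = 1 ∧ ∀ j, aeval ζ (plaistedClause n (B j)) = 0 := by
  classical
  have hchar : ∀ i : Fin n, (Nat.nth Nat.Prime (i : ℕ) : K) ≠ 0 :=
    fun i => char_not_dvd hK i
  set Q := primProd n with hQdef
  have hQpos : 0 < Q := primProd_pos n
  constructor
  · rintro ⟨σ, hσ⟩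
    obtain ⟨ζ, hζ⟩ := exists_orderOf_eq hK
    set d := ∏ j ∈ Finset.univ.filter (fun j => σ j = false),
      Nat.nth Nat.Prime (j : ℕ) with hd
    have hdQ : d ∣ Q := by
      rw [hQdef, primProd_eq_fin]
      exact Finset.prod_dvd_prod_of_subset _ _ _ (Finset.filter_subset _ _)
    have hepos : 0 < Q / d := Nat.div_pos (Nat.le_of_dvd hQpos hdQ)
      (Finset.prod_pos fun j _ => (pp_prime _).pos)
    set ξ := ζ ^ (Q / d) with hξdef
    have hξQ : ξ ^ Q = 1 := by
      rw [hξdef, ← pow_mul, ← orderOf_dvd_iff_pow_eq_one, hζ]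
      exact dvd_mul_left _ _
    have hcorr : ∀ i : Fin n,
        (ξ ^ (Q / Nat.nth Nat.Prime (i : ℕ)) = 1 ↔ σ i = true) := by
      intro i
      rw [hξdef, ← pow_mul, ← orderOf_dvd_iff_pow_eq_one, hζ]
      rw [← dvd_primProd_div_iff σ i, ← hd, ← hQdef]
      constructor
      · intro h
        have h2 : d * (Q / d) ∣ (Q / d) * (Q / Nat.nth Nat.Prime (i : ℕ)) := by
          rwa [Nat.mul_div_cancel' hdQ]
        rw [mul_comm d _] at h2
        exact (Nat.mul_dvd_mul_iff_left hepos).mp h2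
      · intro h
        have h2 : (Q / d) * d ∣ (Q / d) * (Q / Nat.nth Nat.Prime (i : ℕ)) :=
          (Nat.mul_dvd_mul_iff_left hepos).mpr h
        rwa [mul_comm (Q / d) d, Nat.mul_div_cancel' hdQ] at h2
    have litzero : ∀ L : Lit n, litHolds σ L → aeval ξ (plaistedLit n L) = 0 := by
      intro L hL
      rw [lit_root_iff hξQ hchar]
      cases hb : L.1 with
      | false =>
        simp only [litHolds, hb, Bool.false_eq_true, reduceIte] at hL
        rw [if_neg (by simp)]
        exact (hcorr L.2).mpr hL
      | true =>
        simp only [litHolds, hb, reduceIte] at hL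
        rw [if_pos rfl]
        intro h1
        have := (hcorr L.2).mp h1
        rw [hL] at this
        simp at this
    refine ⟨ξ, hξQ, fun j => ?_⟩
    rw [clause_root_iff]
    rcases hσ j with h | h | h
    · exact Or.inl (litzero _ h)
    · exact Or.inr (Or.inl (litzero _ h))
    · exact Or.inr (Or.inr (litzero _ h))
  · rintro ⟨ζ, hζQ, hroot⟩
    refine ⟨fun i => decide (ζ ^ (Q / Nat.nth Nat.Prime (i : ℕ)) = 1),
      fun j => ?_⟩
    have litholds : ∀ L : Lit n, aeval ζ (plaistedLit n L) = 0 →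
        litHolds (fun i => decide (ζ ^ (Q / Nat.nth Nat.Prime (i : ℕ)) = 1)) L := by
      intro L hL
      rw [lit_root_iff hζQ hchar] at hL
      cases hb : L.1 with
      | false =>
        rw [hb] at hL
        simp only [Bool.false_eq_true, reduceIte] at hL
        simp only [litHolds, hb, Bool.false_eq_true, reduceIte]
        simpa using hL
      | true =>
        rw [hb] at hL
        simp only [reduceIte] at hL
        simp only [litHolds, hb, reduceIte]
        simpa using hL
    rcases (clause_root_iff ζ (B j)).mp (hroot j) with h | h | h
    · exact Or.inl (litholds _ h)
    · exact Or.inr (Or.inl (litholds _ h))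
    · exact Or.inr (Or.inr (litholds _ h))
end
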